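/- arXiv:0910.2293 — 3 statements merged into one kernel-verified Lean document; each statement's English description precedes it below -/
import Mathlib

section
/- Suppose a graded diagram D is built only from the following indecomposable pieces: (1) one even row of length 4p+1 (p ≥ 0); (2) one odd row of length 4p−1 (p ≥ 1); (3) two even rows of length 4p−1 (p ≥ 1); (4) two odd rows of length 4p+1 (p ≥ 0); (5) one even and one odd row of common length 2p (p ≥ 1). Then in the associated partition d₀ every even part occurs with even multiplicity, and in d₁ every odd part occurs with even multiplicity. -/
def rowLabel (b : Bool) (i : ℕ) : Bool := xor b (decide (i % 2 = 1))

def onesCount (l : ℕ) (b : Bool) : ℕ :=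
  ((Finset.range l).filter fun i => rowLabel b i = true).card

def zerosCount (l : ℕ) (b : Bool) : ℕ :=
  ((Finset.range l).filter fun i => rowLabel b i = false).card

/-- The five Kraft–Procesi indecomposable graded diagrams (a row is a pair
`(length, starting label)`, `false` = even row, `true` = odd row). -/
def Indec (M : Multiset (ℕ × Bool)) : Prop :=
  (∃ p : ℕ, M = {(4 * p + 1, false)}) ∨
  (∃ p : ℕ, 1 ≤ p ∧ M = {(4 * p - 1, true)}) ∨
  (∃ p : ℕ, 1 ≤ p ∧ M = {(4 * p - 1, false), (4 * p - 1, false)}) ∨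
  (∃ p : ℕ, M = {(4 * p + 1, true), (4 * p + 1, true)}) ∨
  (∃ p : ℕ, 1 ≤ p ∧ M = {(2 * p, false), (2 * p, true)})

/-! Labels alternate along a row, so a row of length `l` starting with label `b` has
`(l + b) / 2` ones and `(l + 1 - b) / 2` zeros. Multiplicities in `d₀`, `d₁` add up over the
pieces, so it suffices to look at one piece: a pair of equal rows contributes an even
multiplicity, the even and the odd row of length `2p` have the same counts (`p` each), and a
single row of length `4p ± 1` has an odd number of zeros and an even number of ones, so it
contributes nothing to the multiplicities in question. -/

open Multiset

lemma rowLabel_not (b : Bool) (i : ℕ) : rowLabel (!b) i = !rowLabel b i := by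
  cases b <;> simp [rowLabel]

lemma zerosCount_eq_onesCount_not (l : ℕ) (b : Bool) : zerosCount l b = onesCount l (!b) := by
  simp [zerosCount, onesCount, rowLabel_not]

lemma onesCount_succ (l : ℕ) (b : Bool) :
    onesCount (l + 1) b = onesCount l b + (rowLabel b l).toNat := by
  rw [onesCount, onesCount, Finset.range_add_one, Finset.filter_insert]
  split_ifs with h
  · rw [Finset.card_insert_of_notMem (by simp), h, Bool.toNat_true]
  · simp_all

lemma onesCount_eq (l : ℕ) (b : Bool) : onesCount l b = (l + b.toNat) / 2 := by
  induction l with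
  | zero => cases b <;> simp [onesCount]
  | succ l ih =>
    rw [onesCount_succ, ih, rowLabel]
    cases b <;> rcases Nat.mod_two_eq_zero_or_one l with h | h <;>
      simp only [h, Bool.toNat_false, Bool.toNat_true, add_zero, zero_ne_one, decide_false,
        decide_true, Bool.bne_false, Bool.bne_true, bne_self_eq_false, Bool.not_false] <;>
      omega

lemma zerosCount_eq (l : ℕ) (b : Bool) : zerosCount l b = (l + (!b).toNat) / 2 := by
  rw [zerosCount_eq_onesCount_not, onesCount_eq]

lemma even_count_pair {β : Type*} [DecidableEq β] (a c : β) : Even (count a {c, c}) := by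
  rw [insert_eq_cons, count_cons, count_singleton]
  split_ifs <;> simp

theorem even_count_map_sum {α β : Type*} [DecidableEq β] (S : Multiset (Multiset α))
    (f : α → β) (b : β) (h : ∀ M ∈ S, Even (count b (M.map f))) :
    Even (count b (S.sum.map f)) := by
  induction S using Multiset.induction with
  | empty => simp
  | cons M S ih =>
    rw [sum_cons, map_add, count_add]
    exact (h M (mem_cons_self M S)).add (ih fun N hN => h N (mem_cons_of_mem hN))

theorem Indec.even_count_map {β : Type*} [DecidableEq β] {M : Multiset (ℕ × Bool)}
    (hM : Indec M) (f : ℕ × Bool → β) {a : β}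
    (h_single_even : ∀ p, f (4 * p + 1, false) ≠ a) (h_single_odd : ∀ p, 1 ≤ p → f (4 * p - 1, true) ≠ a)
    (h_mixed : ∀ p, f (2 * p, false) = f (2 * p, true)) :
    Even (count a (M.map f)) := by
  rcases hM with ⟨p, rfl⟩ | ⟨p, hp, rfl⟩ | ⟨p, -, rfl⟩ | ⟨p, rfl⟩ | ⟨p, -, rfl⟩
  · simp [(h_single_even p).symm]
  · simp [(h_single_odd p hp).symm]
  · exact even_count_pair _ _
  · exact even_count_pair _ _
  · rw [insert_eq_cons, map_cons, map_singleton, h_mixed]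
    exact even_count_pair _ _

theorem Indec.even_count_map_zerosCount {M : Multiset (ℕ × Bool)} (hM : Indec M) {a : ℕ}
    (ha : a % 2 = 0) : Even (count a (M.map fun r => zerosCount r.1 r.2)) :=
  hM.even_count_map _ (by simp [zerosCount_eq]; omega) (by simp [zerosCount_eq]; omega)
    (by simp [zerosCount_eq]; omega)

theorem Indec.even_count_map_onesCount {M : Multiset (ℕ × Bool)} (hM : Indec M) {a : ℕ}
    (ha : a % 2 = 1) : Even (count a (M.map fun r => onesCount r.1 r.2)) :=
  hM.even_count_map _ (by simp [onesCount_eq]; omega) (by simp [onesCount_eq]; omega)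
    (by simp [onesCount_eq]; omega)

/-- if a graded diagram `D` is a union of Kraft–Procesi indecomposable
pieces, then every even part of `d₀` occurs with even multiplicity and every odd part
of `d₁` occurs with even multiplicity. -/
theorem stmt8 (pieces : Multiset (Multiset (ℕ × Bool)))
    (hind : ∀ M ∈ pieces, Indec M)
    (D : Multiset (ℕ × Bool)) (hD : D = pieces.sum) :
    (∀ a : ℕ, 0 < a → a % 2 = 0 →
      Even (Multiset.count a (D.map fun r => zerosCount r.1 r.2))) ∧
    (∀ a : ℕ, a % 2 = 1 →
      Even (Multiset.count a (D.map fun r => onesCount r.1 r.2))) := by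
  subst hD
  exact ⟨fun a _ ha => even_count_map_sum pieces _ a fun M hM =>
      (hind M hM).even_count_map_zerosCount ha,
    fun a ha => even_count_map_sum pieces _ a fun M hM =>
      (hind M hM).even_count_map_onesCount ha⟩
end

section
/- Let D, D' be graded diagrams with n₀(D) = n₀(D') and n₁(D) = n₁(D'). If D ≤ D' in the column-deletion order (for all k ≥ 1, n₀(D^(k)) ≤ n₀(D'^(k)) and n₁(D^(k)) ≤ n₁(D'^(k))), then the underlying partition of D is dominated by the underlying partition of D' in the dominance order on partitions. -/
def nZeros (D : Multiset (ℕ × Bool)) : ℕ := (D.map fun r => zerosCount r.1 r.2).sum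

def nOnes (D : Multiset (ℕ × Bool)) : ℕ := (D.map fun r => onesCount r.1 r.2).sum

def deleteCols (k : ℕ) (D : Multiset (ℕ × Bool)) : Multiset (ℕ × Bool) :=
  (D.filter fun r => k < r.1).map fun r => (r.1 - k, xor r.2 (decide (k % 2 = 1)))

def diagLE (D D' : Multiset (ℕ × Bool)) : Prop :=
  ∀ k : ℕ, 1 ≤ k →
    nZeros (deleteCols k D) ≤ nZeros (deleteCols k D') ∧
    nOnes (deleteCols k D) ≤ nOnes (deleteCols k D')

/-- The shape of a graded diagram: its row lengths sorted in decreasing order. -/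
def shape (D : Multiset (ℕ × Bool)) : List ℕ := (D.map fun r => r.1).sort (· ≥ ·)

namespace List

theorem sum_le_length_mul_add_sum_tsub (l : List ℕ) (k : ℕ) :
    l.sum ≤ l.length * k + (l.map (· - k)).sum := by
  induction l with
  | nil => simp
  | cons a l ih =>
    simp only [map_cons, sum_cons, length_cons, Nat.succ_mul]
    omega

theorem sum_eq_length_mul_add_sum_tsub {l : List ℕ} {k : ℕ} (h : ∀ x ∈ l, k ≤ x) :
    l.sum = l.length * k + (l.map (· - k)).sum := by
  induction l with
  | nil => simp
  | cons a l ih =>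
    simp only [forall_mem_cons] at h
    simp only [map_cons, sum_cons, length_cons, Nat.succ_mul, ih h.2]
    omega

theorem sum_take_le_mul_add_sum_tsub (l : List ℕ) (j k : ℕ) :
    (l.take j).sum ≤ j * k + (l.map (· - k)).sum := by
  have hlen : (l.take j).length ≤ j := length_take_le j l
  have htsub : ((l.take j).map (· - k)).sum ≤ (l.map (· - k)).sum := by
    rw [map_take]
    exact Nat.le.intro (sum_take_add_sum_drop _ j)
  calc (l.take j).sum ≤ (l.take j).length * k + ((l.take j).map (· - k)).sum :=
        sum_le_length_mul_add_sum_tsub _ k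
    _ ≤ j * k + (l.map (· - k)).sum := by gcongr

theorem exists_sum_take_eq_mul_add_sum_tsub {l : List ℕ} (hl : l.Pairwise (· ≥ ·)) (j : ℕ) :
    ∃ k, (l.take j).sum = j * k + (l.map (· - k)).sum := by
  have hsplit := take_append_drop j l
  cases hdrop : l.drop j with
  | nil =>
    refine ⟨0, ?_⟩
    simp [take_of_length_le (drop_eq_nil_iff.mp hdrop)]
  | cons k rest =>
    refine ⟨k, ?_⟩
    have hj : j ≤ l.length := by
      have := length_drop (i := j) (l := l)
      simp only [hdrop, length_cons] at this
      omega
    rw [← hsplit, hdrop] at hl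
    obtain ⟨-, hrest, hcross⟩ := pairwise_append.mp hl
    have htake : ∀ x ∈ l.take j, k ≤ x := fun x hx => hcross x hx k mem_cons_self
    have hdrop_tsub : ((k :: rest).map (· - k)).sum = 0 := by
      refine sum_eq_zero fun y hy => ?_
      simp only [map_cons, Nat.sub_self, mem_cons, mem_map] at hy
      obtain rfl | ⟨x, hx, rfl⟩ := hy
      · rfl
      · exact Nat.sub_eq_zero_of_le ((pairwise_cons.mp hrest).1 x hx)
    have htsub : (l.map (· - k)).sum = ((l.take j).map (· - k)).sum := by
      conv_lhs => rw [← hsplit, hdrop]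
      rw [map_append, sum_append, hdrop_tsub, add_zero]
    rw [htsub, sum_eq_length_mul_add_sum_tsub htake, length_take_of_le hj]

theorem sum_take_le_sum_take_of_sum_tsub_le {s t : List ℕ} (ht : t.Pairwise (· ≥ ·))
    (h : ∀ k, (s.map (· - k)).sum ≤ (t.map (· - k)).sum) (j : ℕ) :
    (s.take j).sum ≤ (t.take j).sum := by
  obtain ⟨k, hk⟩ := exists_sum_take_eq_mul_add_sum_tsub ht j
  calc (s.take j).sum ≤ j * k + (s.map (· - k)).sum := sum_take_le_mul_add_sum_tsub s j k
    _ ≤ j * k + (t.map (· - k)).sum := by gcongr; exact h k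
    _ = (t.take j).sum := hk.symm

end List

theorem onesCount_add_zerosCount (l : ℕ) (b : Bool) : onesCount l b + zerosCount l b = l := by
  simpa [onesCount, zerosCount, Bool.not_eq_true] using
    Finset.card_filter_add_card_filter_not (s := Finset.range l) (p := fun i => rowLabel b i = true)

theorem nZeros_add_nOnes (D : Multiset (ℕ × Bool)) :
    nZeros D + nOnes D = (D.map Prod.fst).sum := by
  rw [nZeros, nOnes, ← Multiset.sum_map_add]
  congr 1
  exact Multiset.map_congr rfl fun r _ => by rw [add_comm, onesCount_add_zerosCount]

theorem nZeros_add_nOnes_deleteCols (k : ℕ) (D : Multiset (ℕ × Bool)) :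
    nZeros (deleteCols k D) + nOnes (deleteCols k D) = (D.map fun r => r.1 - k).sum := by
  have hshort : ((D.filter fun r => ¬k < r.1).map fun r => r.1 - k).sum = 0 :=
    Multiset.sum_eq_zero fun x hx => by
      obtain ⟨r, hr, rfl⟩ := Multiset.mem_map.mp hx
      exact Nat.sub_eq_zero_of_le (not_lt.mp (Multiset.mem_filter.mp hr).2)
  conv_rhs => rw [← Multiset.filter_add_not (fun r => k < r.1) D]
  rw [Multiset.map_add, Multiset.sum_add, hshort, add_zero, nZeros_add_nOnes, deleteCols,
    Multiset.map_map]
  rfl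

theorem sum_map_shape (f : ℕ → ℕ) (D : Multiset (ℕ × Bool)) :
    ((shape D).map f).sum = (D.map fun r => f r.1).sum := by
  rw [shape, ← Multiset.sum_coe, ← Multiset.map_coe, Multiset.sort_eq, Multiset.map_map]
  rfl

theorem sum_tsub_le_of_diagLE {D D' : Multiset (ℕ × Bool)}
    (hn0 : nZeros D = nZeros D') (hn1 : nOnes D = nOnes D') (hle : diagLE D D') (k : ℕ) :
    (D.map fun r => r.1 - k).sum ≤ (D'.map fun r => r.1 - k).sum := by
  rcases Nat.eq_zero_or_pos k with rfl | hk
  · simp only [Nat.sub_zero]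
    rw [← nZeros_add_nOnes, ← nZeros_add_nOnes, hn0, hn1]
  · rw [← nZeros_add_nOnes_deleteCols, ← nZeros_add_nOnes_deleteCols]
    exact Nat.add_le_add (hle k hk).1 (hle k hk).2

theorem stmt13_general (D D' : Multiset (ℕ × Bool))
    (hn0 : nZeros D = nZeros D') (hn1 : nOnes D = nOnes D')
    (hle : diagLE D D') :
    ∀ j : ℕ, ((shape D).take j).sum ≤ ((shape D').take j).sum := by
  refine List.sum_take_le_sum_take_of_sum_tsub_le (Multiset.pairwise_sort _ _) fun k => ?_
  rw [sum_map_shape, sum_map_shape]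
  exact sum_tsub_le_of_diagLE hn0 hn1 hle k

/-- if `D ≤ D'` in the column-deletion order and `D`, `D'` have the
same numbers of 0-boxes and 1-boxes, then the shape of `D` is dominated by the
shape of `D'` (all partial sums of the decreasingly sorted row lengths compare). -/
theorem stmt13 (D D' : Multiset (ℕ × Bool))
    (hpos : ∀ r ∈ D, 0 < r.1) (hpos' : ∀ r ∈ D', 0 < r.1)
    (hn0 : nZeros D = nZeros D') (hn1 : nOnes D = nOnes D')
    (hle : diagLE D D') :
    ∀ j : ℕ, ((shape D).take j).sum ≤ ((shape D').take j).sum :=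
  stmt13_general D D' hn0 hn1 hle
end

section
/- For k > l ≥ 1, consider graded diagrams containing the sub-diagram configurations D₂ with rows of lengths (2k, 2k, 2k−2, 2k−2, 2l−1, 2l−1, 2l−1, 2l−1) and D₃ with rows of lengths (2k−1, 2k−1, 2k−1, 2k−1, 2l, 2l, 2l−2, 2l−2) (parities as in the Kraft–Procesi indecomposables so that both have d₀ = d₁ = (k,k,k−1,k−1,l,l,l−1,l−1)). Then D₂ and D₃ are incomparable in the column-deletion order. -/
lemma zerosCount_add_zerosCount_not (L : ℕ) (b : Bool) :
    zerosCount L b + zerosCount L (!b) = L := by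
  have hflip : ∀ i, (rowLabel (!b) i = false) ↔ ¬ rowLabel b i = false := by
    intro i; cases b <;> simp [rowLabel]
  simp only [zerosCount, hflip]
  rw [Finset.card_filter_add_card_filter_not, Finset.card_range]

lemma nZeros_deleteCols_add (c : ℕ) (D E : Multiset (ℕ × Bool)) :
    nZeros (deleteCols c (D + E)) = nZeros (deleteCols c D) + nZeros (deleteCols c E) := by
  simp only [nZeros, deleteCols, Multiset.filter_add, Multiset.map_add, Multiset.sum_add]

def rowPair (L : ℕ) : Multiset (ℕ × Bool) := {(L, false), (L, true)}

lemma nZeros_deleteCols_rowPair (c L : ℕ) : nZeros (deleteCols c (rowPair L)) = L - c := by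
  by_cases hc : c < L
  · have hpair := zerosCount_add_zerosCount_not (L - c) (decide (c % 2 = 1))
    simpa [nZeros, deleteCols, rowPair, Multiset.filter_singleton, hc] using hpair
  · simp [nZeros, deleteCols, rowPair, Multiset.filter_singleton, hc,
      Nat.sub_eq_zero_of_le (not_lt.mp hc)]

def diagramD₂ (k l : ℕ) : Multiset (ℕ × Bool) :=
  {(2 * k, false), (2 * k, true), (2 * k - 2, false), (2 * k - 2, true),
    (2 * l - 1, false), (2 * l - 1, false), (2 * l - 1, true), (2 * l - 1, true)}

def diagramD₃ (k l : ℕ) : Multiset (ℕ × Bool) :=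
  {(2 * k - 1, false), (2 * k - 1, false), (2 * k - 1, true), (2 * k - 1, true),
    (2 * l, false), (2 * l, true), (2 * l - 2, false), (2 * l - 2, true)}

lemma diagramD₂_eq_rowPairs (k l : ℕ) :
    diagramD₂ k l =
      rowPair (2 * k) + rowPair (2 * k - 2) + rowPair (2 * l - 1) + rowPair (2 * l - 1) := by
  simp only [diagramD₂, rowPair, Multiset.insert_eq_cons, Multiset.cons_add,
    Multiset.singleton_add, Multiset.add_cons]
  simp only [Multiset.cons_swap]

lemma nZeros_deleteCols_diagramD₂ (c k l : ℕ) :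
    nZeros (deleteCols c (diagramD₂ k l)) =
      (2 * k - c) + (2 * k - 2 - c) + (2 * l - 1 - c) + (2 * l - 1 - c) := by
  simp only [diagramD₂_eq_rowPairs, nZeros_deleteCols_add, nZeros_deleteCols_rowPair]

lemma diagramD₃_eq_rowPairs (k l : ℕ) :
    diagramD₃ k l =
      rowPair (2 * k - 1) + rowPair (2 * k - 1) + rowPair (2 * l) + rowPair (2 * l - 2) := by
  simp only [diagramD₃, rowPair, Multiset.insert_eq_cons, Multiset.cons_add,
    Multiset.singleton_add, Multiset.add_cons]
  simp only [Multiset.cons_swap]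

lemma nZeros_deleteCols_diagramD₃ (c k l : ℕ) :
    nZeros (deleteCols c (diagramD₃ k l)) =
      (2 * k - 1 - c) + (2 * k - 1 - c) + (2 * l - c) + (2 * l - 2 - c) := by
  simp only [diagramD₃_eq_rowPairs, nZeros_deleteCols_add, nZeros_deleteCols_rowPair]

/-- for `k > l ≥ 1`, the graded diagram `D₂` with rows of lengths
`(2k, 2k, 2k-2, 2k-2, 2l-1, 2l-1, 2l-1, 2l-1)` and the graded diagram `D₃` with rows
of lengths `(2k-1, 2k-1, 2k-1, 2k-1, 2l, 2l, 2l-2, 2l-2)` (parities as in the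
Kraft–Procesi indecomposables, so that both have
`d₀ = d₁ = (k,k,k-1,k-1,l,l,l-1,l-1)`) are incomparable in the column-deletion order. -/
theorem stmt16 (k l : ℕ) (hl : 1 ≤ l) (hkl : l < k)
    (D₂ D₃ : Multiset (ℕ × Bool))
    (hD₂ : D₂ = {(2 * k, false), (2 * k, true), (2 * k - 2, false), (2 * k - 2, true),
      (2 * l - 1, false), (2 * l - 1, false), (2 * l - 1, true), (2 * l - 1, true)})
    (hD₃ : D₃ = {(2 * k - 1, false), (2 * k - 1, false), (2 * k - 1, true), (2 * k - 1, true),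
      (2 * l, false), (2 * l, true), (2 * l - 2, false), (2 * l - 2, true)}) :
    ¬ diagLE D₂ D₃ ∧ ¬ diagLE D₃ D₂ := by
  obtain rfl : D₂ = diagramD₂ k l := hD₂
  obtain rfl : D₃ = diagramD₃ k l := hD₃
  constructor
  · intro h
    have hzeros := (h (2 * k - 1) (by omega)).1
    rw [nZeros_deleteCols_diagramD₂, nZeros_deleteCols_diagramD₃] at hzeros
    omega
  · intro h
    have hzeros := (h (2 * l - 1) (by omega)).1
    rw [nZeros_deleteCols_diagramD₂, nZeros_deleteCols_diagramD₃] at hzeros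
    omega
end
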